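/- arXiv:1009.2652 — 5 statements merged into one kernel-verified Lean document; each statement's English description precedes it below -/
import Mathlib

section
/- Let Γ_{0,n} be the quotient of B_n by the normal closure of (σ_1⋯σ_{n-1})^n and σ_1σ_2⋯σ_{n-1}^2⋯σ_2σ_1. Then the images r̄ of ρ = σ_1⋯σ_{n-1} and s̄ of the half-twist h_n in Γ_{0,n} satisfy s̄^2 = r̄^n = (s̄ r̄^{-1})^2 = 1; consequently there is a group homomorphism from the dihedral group D_n = ⟨r, s | r^n = s^2 = (rs)^2 = 1⟩ to Γ_{0,n} with r ↦ r̄, s ↦ s̄. -/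
/-- The Artin braid relations on generators `σ_0, …, σ_{m-1}` (0-indexed). -/
def braidRels (m : ℕ) : Set (FreeGroup (Fin m)) :=
  {r | ∃ i j : Fin m,
      ((i : ℕ) + 1 = (j : ℕ) ∧
        r = FreeGroup.of i * FreeGroup.of j * FreeGroup.of i *
          (FreeGroup.of j * FreeGroup.of i * FreeGroup.of j)⁻¹) ∨
      ((i : ℕ) + 1 < (j : ℕ) ∧
        r = FreeGroup.of i * FreeGroup.of j * (FreeGroup.of j * FreeGroup.of i)⁻¹)}

/-- The braid group on `n` strands. -/
abbrev BraidGroup (n : ℕ) := PresentedGroup (braidRels (n - 1))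

/-- The generator `σ_{i+1}` of `B_n` (0-indexed); equals `1` out of range. -/
def braidGen (n i : ℕ) : BraidGroup n :=
  if h : i < n - 1 then PresentedGroup.of ⟨i, h⟩ else 1

/-- `ρ = σ_1 ⋯ σ_{n-1}`. -/
def braidRho (n : ℕ) : BraidGroup n := ((List.range (n - 1)).map (braidGen n)).prod

/-- The full twist `z_n = (σ_1 ⋯ σ_{n-1})^n`. -/
def fullTwist (n : ℕ) : BraidGroup n := braidRho n ^ n

/-- The half twist `h_n = σ_1 (σ_2 σ_1) ⋯ (σ_{n-1} ⋯ σ_1)`. -/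
def halfTwist (n : ℕ) : BraidGroup n :=
  ((List.range (n - 1)).map
    (fun k => (((List.range (k + 1)).reverse).map (braidGen n)).prod)).prod

/-- The sphere relator `σ_1 σ_2 ⋯ σ_{n-2} σ_{n-1}^2 σ_{n-2} ⋯ σ_2 σ_1
  = (σ_1 ⋯ σ_{n-1})·(σ_{n-1} ⋯ σ_1)`. -/
def sphereRel (n : ℕ) : BraidGroup n :=
  braidRho n * (((List.range (n - 1)).reverse).map (braidGen n)).prod

/-- The genus-zero mapping class group `Γ_{0,n}`, the quotient of `B_n` by the normal
closure of the full twist and the sphere relator. -/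
abbrev MCG0 (n : ℕ) :=
  BraidGroup n ⧸ Subgroup.normalClosure {fullTwist n, sphereRel n}


namespace BraidAux

variable {G : Type*} [Group G]

def seg (s : ℕ → G) (j k : ℕ) : G := ((List.range k).map fun t => s (j + t)).prod

def dseg (s : ℕ → G) (j k : ℕ) : G := ((List.range k).reverse.map fun t => s (j + t)).prod

def htw (s : ℕ → G) (m : ℕ) : G := ((List.range m).map fun k => dseg s 0 (k + 1)).prod

variable (s : ℕ → G)

@[simp] lemma seg_zero (j : ℕ) : seg s j 0 = 1 := by simp [seg]

@[simp] lemma dseg_zero (j : ℕ) : dseg s j 0 = 1 := by simp [dseg]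

@[simp] lemma htw_zero : htw s 0 = 1 := by simp [htw]

lemma seg_succ (j k : ℕ) : seg s j (k + 1) = seg s j k * s (j + k) := by
  simp [seg, List.range_succ]

lemma dseg_succ (j k : ℕ) : dseg s j (k + 1) = s (j + k) * dseg s j k := by
  simp [dseg, List.range_succ]

@[simp] lemma seg_one (j : ℕ) : seg s j 1 = s j := by simp [seg, List.range_succ]

@[simp] lemma dseg_one (j : ℕ) : dseg s j 1 = s j := by simp [dseg, List.range_succ]

lemma htw_succ (m : ℕ) : htw s (m + 1) = htw s m * dseg s 0 (m + 1) := by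
  simp [htw, List.range_succ]

lemma seg_append (j a b : ℕ) : seg s j (a + b) = seg s j a * seg s (j + a) b := by
  induction b with
  | zero => simp
  | succ b ih =>
      have h : j + (a + b) = (j + a) + b := by omega
      rw [show a + (b+1) = (a+b)+1 from rfl, seg_succ, ih, seg_succ, h, mul_assoc]

lemma dseg_append (j a b : ℕ) : dseg s j (a + b) = dseg s (j + a) b * dseg s j a := by
  induction b with
  | zero => simp
  | succ b ih =>
      have h : j + (a + b) = (j + a) + b := by omega
      rw [show a + (b+1) = (a+b)+1 from rfl, dseg_succ, ih, dseg_succ, h, mul_assoc]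

lemma seg_cons (j k : ℕ) : seg s j (k + 1) = s j * seg s (j + 1) k := by
  have := seg_append s j 1 k
  rw [Nat.add_comm 1 k] at this
  simpa using this

lemma dseg_cons (j k : ℕ) : dseg s j (k + 1) = dseg s (j + 1) k * s j := by
  have := dseg_append s j 1 k
  rw [Nat.add_comm 1 k] at this
  simpa using this

lemma comm_seg (x : G) {j k : ℕ} (h : ∀ t, t < k → x * s (j + t) = s (j + t) * x) :
    x * seg s j k = seg s j k * x := by
  induction k with
  | zero => simp
  | succ k ih =>
      rw [seg_succ, ← mul_assoc, ih (fun t ht => h t (by omega)), mul_assoc,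
        h k (by omega), mul_assoc]

lemma comm_dseg (x : G) {j k : ℕ} (h : ∀ t, t < k → x * s (j + t) = s (j + t) * x) :
    x * dseg s j k = dseg s j k * x := by
  induction k with
  | zero => simp
  | succ k ih =>
      rw [dseg_succ, ← mul_assoc, h k (by omega), mul_assoc, ih (fun t ht => h t (by omega)),
        mul_assoc]

section Rels

variable {M : ℕ} {s}
variable (hb : ∀ i, i + 2 ≤ M → s i * s (i+1) * s i = s (i+1) * s i * s (i+1))
  (hc : ∀ i j, i + 2 ≤ j → j < M → s i * s j = s j * s i)

include hb hc

/-- `ρ_k σ_i = σ_{i+1} ρ_k` for `i + 2 ≤ k`. -/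
lemma seg_shift {i k : ℕ} (hik : i + 2 ≤ k) (hkM : k ≤ M) :
    seg s 0 k * s i = s (i+1) * seg s 0 k := by
  obtain ⟨d, rfl⟩ : ∃ d, k = i + 2 + d := ⟨k - (i+2), by omega⟩
  have hdecomp : seg s 0 (i + 2 + d) = seg s 0 i * (s i * (s (i+1) * seg s (i+2) d)) := by
    rw [show i + 2 + d = i + (2 + d) by omega, seg_append, Nat.zero_add,
      show 2 + d = (1 + d) + 1 by omega, seg_cons,
      show 1 + d = d + 1 by omega, seg_cons]
  have hc1 : s i * seg s (i+2) d = seg s (i+2) d * s i :=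
    comm_seg s (s i) (fun t ht => hc i (i+2+t) (by omega) (by omega))
  have hc2 : s (i+1) * seg s 0 i = seg s 0 i * s (i+1) :=
    comm_seg s (s (i+1)) (fun t ht => by
      have := (hc (0+t) (i+1) (by omega) (by omega)).symm
      simpa using this)
  calc seg s 0 (i+2+d) * s i
      = seg s 0 i * (s i * s (i+1)) * (seg s (i+2) d * s i) := by
        rw [hdecomp]; simp only [mul_assoc]
    _ = seg s 0 i * (s i * s (i+1)) * (s i * seg s (i+2) d) := by rw [← hc1]
    _ = seg s 0 i * (s i * s (i+1) * s i) * seg s (i+2) d := by simp only [mul_assoc]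
    _ = seg s 0 i * (s (i+1) * s i * s (i+1)) * seg s (i+2) d := by rw [hb i (by omega)]
    _ = (seg s 0 i * s (i+1)) * (s i * (s (i+1) * seg s (i+2) d)) := by simp only [mul_assoc]
    _ = s (i+1) * (seg s 0 i * (s i * (s (i+1) * seg s (i+2) d))) := by
        rw [← hc2]; simp only [mul_assoc]
    _ = s (i+1) * seg s 0 (i+2+d) := by rw [hdecomp]

/-- `σ_i δ_k = δ_k σ_{i+1}` for `i + 2 ≤ k`. -/
lemma dseg_shift {i k : ℕ} (hik : i + 2 ≤ k) (hkM : k ≤ M) :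
    s i * dseg s 0 k = dseg s 0 k * s (i+1) := by
  obtain ⟨d, rfl⟩ : ∃ d, k = i + 2 + d := ⟨k - (i+2), by omega⟩
  have hdecomp : dseg s 0 (i + 2 + d) = dseg s (i+2) d * (s (i+1) * (s i * dseg s 0 i)) := by
    rw [show i + 2 + d = (i + 2) + d by omega, dseg_append, Nat.zero_add,
      dseg_succ, dseg_succ, Nat.zero_add, Nat.zero_add]
  have hc1 : s i * dseg s (i+2) d = dseg s (i+2) d * s i :=
    comm_dseg s (s i) (fun t ht => hc i (i+2+t) (by omega) (by omega))
  have hc2 : s (i+1) * dseg s 0 i = dseg s 0 i * s (i+1) :=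
    comm_dseg s (s (i+1)) (fun t ht => by
      have := (hc (0+t) (i+1) (by omega) (by omega)).symm
      simpa using this)
  calc s i * dseg s 0 (i+2+d)
      = (s i * dseg s (i+2) d) * (s (i+1) * (s i * dseg s 0 i)) := by
        rw [hdecomp]; simp only [mul_assoc]
    _ = dseg s (i+2) d * (s i * s (i+1) * s i) * dseg s 0 i := by
        rw [hc1]; simp only [mul_assoc]
    _ = dseg s (i+2) d * (s (i+1) * s i * s (i+1)) * dseg s 0 i := by rw [hb i (by omega)]
    _ = dseg s (i+2) d * (s (i+1) * (s i * (s (i+1) * dseg s 0 i))) := by simp only [mul_assoc]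
    _ = dseg s (i+2) d * (s (i+1) * (s i * (dseg s 0 i * s (i+1)))) := by rw [hc2]
    _ = dseg s 0 (i+2+d) * s (i+1) := by rw [hdecomp]; simp only [mul_assoc]

lemma comm_htw {m i : ℕ} (h1 : m + 1 ≤ i) (h2 : i < M) :
    s i * htw s m = htw s m * s i := by
  induction m with
  | zero => simp
  | succ m ih =>
      rw [htw_succ, ← mul_assoc, ih (by omega), mul_assoc,
        comm_dseg s (s i) (fun t ht => (hc (0+t) i (by omega) h2).symm), mul_assoc]

/-- `Δ_{m+1} = ρ_{m+1} Δ_m`. -/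
lemma htw_succ_eq {m : ℕ} (hM : m + 1 ≤ M) :
    htw s (m + 1) = seg s 0 (m + 1) * htw s m := by
  induction m with
  | zero => rw [htw_succ]; simp
  | succ m ih =>
      calc htw s (m+2) = (seg s 0 (m+1) * htw s m) * (s (m+1) * dseg s 0 (m+1)) := by
            rw [htw_succ, ih (by omega), dseg_succ, Nat.zero_add]
        _ = seg s 0 (m+1) * (s (m+1) * htw s m) * dseg s 0 (m+1) := by
            rw [comm_htw hb hc (by omega) (by omega)]; simp only [mul_assoc]
        _ = seg s 0 (m+2) * htw s (m+1) := by
            rw [show seg s 0 (m+2) = seg s 0 (m+1) * s (m+1) by rw [seg_succ, Nat.zero_add],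
              htw_succ]
            simp only [mul_assoc]

/-- Half-twist reversal: `Δ_m σ_i = σ_{m-1-i} Δ_m` for `i < m`. -/
lemma htw_rev {m : ℕ} : ∀ i, i < m → m ≤ M → htw s m * s i = s (m - 1 - i) * htw s m := by
  induction m with
  | zero => intro i h; omega
  | succ m ih =>
      intro i hi hM
      match i, m with
      | 0, 0 => simp [htw_succ]
      | 0, m+1 =>
          have h1 : htw s (m+2) = seg s 0 (m+2) * htw s (m+1) := htw_succ_eq hb hc hM
          have h2 : htw s (m+1) * s 0 = s (m+1-1-0) * htw s (m+1) := ih 0 (by omega) (by omega)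
          have h3 : seg s 0 (m+2) * s m = s (m+1) * seg s 0 (m+2) :=
            seg_shift hb hc (by omega) (by omega)
          calc htw s (m+2) * s 0 = seg s 0 (m+2) * (htw s (m+1) * s 0) := by
                rw [h1, mul_assoc]
            _ = (seg s 0 (m+2) * s m) * htw s (m+1) := by
                rw [h2]; simp only [Nat.add_sub_cancel, Nat.sub_zero]; simp only [mul_assoc]
            _ = s (m+1) * htw s (m+2) := by rw [h3, h1]; simp only [mul_assoc]
      | t+1, m =>
          have hds : dseg s 0 (m+1) * s (t+1) = s t * dseg s 0 (m+1) := by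
            have := dseg_shift hb hc (i := t) (k := m+1) (by omega) (by omega)
            rw [this]
          have h2 : htw s m * s t = s (m - 1 - t) * htw s m := ih t (by omega) (by omega)
          calc htw s (m+1) * s (t+1) = htw s m * (dseg s 0 (m+1) * s (t+1)) := by
                rw [htw_succ, mul_assoc]
            _ = (htw s m * s t) * dseg s 0 (m+1) := by rw [hds]; simp only [mul_assoc]
            _ = s (m - 1 - t) * htw s (m+1) := by rw [h2, htw_succ]; simp only [mul_assoc]
          rw [show m + 1 - 1 - (t+1) = m - 1 - t by omega]

/-- `Δ_m (σ_0 ⋯ σ_{k-1}) = (σ_{m-1} ⋯ σ_{m-k}) Δ_m` for `k ≤ m`. -/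
lemma htw_mul_seg {m : ℕ} : ∀ k, k ≤ m → m ≤ M →
    htw s m * seg s 0 k = dseg s (m - k) k * htw s m := by
  intro k
  induction k with
  | zero => simp
  | succ k ih =>
      intro hk hM
      have h6 : htw s m * s k = s (m - 1 - k) * htw s m := htw_rev hb hc k (by omega) hM
      calc htw s m * seg s 0 (k+1) = (htw s m * seg s 0 k) * s k := by
            rw [seg_succ, Nat.zero_add, mul_assoc]
        _ = dseg s (m - k) k * (htw s m * s k) := by
            rw [ih (by omega) hM]; simp only [mul_assoc]
        _ = (dseg s (m - k) k * s (m - 1 - k)) * htw s m := by rw [h6, mul_assoc]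
        _ = dseg s (m - (k+1)) (k+1) * htw s m := by
            rw [dseg_cons, show m - (k+1) + 1 = m - k by omega,
              show m - 1 - k = m - (k+1) by omega]

/-- `(σ_{j+l} ⋯ σ_{j+1}) ρ_m = ρ_m (σ_{j+l-1} ⋯ σ_j)` for `j + l + 1 ≤ m`. -/
lemma dseg_mul_seg {m j : ℕ} : ∀ l, j + l + 1 ≤ m → m ≤ M →
    dseg s (j+1) l * seg s 0 m = seg s 0 m * dseg s j l := by
  intro l
  induction l with
  | zero => simp
  | succ l ih =>
      intro hl hM
      have h1 : seg s 0 m * s (j + l) = s (j + l + 1) * seg s 0 m :=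
        seg_shift hb hc (by omega) hM
      calc dseg s (j+1) (l+1) * seg s 0 m
          = s (j + l + 1) * (dseg s (j+1) l * seg s 0 m) := by
            rw [dseg_succ, show (j+1) + l = j + l + 1 by omega, mul_assoc]
        _ = (s (j + l + 1) * seg s 0 m) * dseg s j l := by rw [ih (by omega) hM, mul_assoc]
        _ = seg s 0 m * dseg s j (l+1) := by rw [← h1, dseg_succ, mul_assoc]

/-- `σ_{p+1} ρ_{p+1} σ_{p+1} = ρ_{p+1} σ_{p+1} σ_p`. -/
lemma key2 {p : ℕ} (hM : p + 2 ≤ M) :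
    s (p+1) * seg s 0 (p+1) * s (p+1) = seg s 0 (p+1) * (s (p+1) * s p) := by
  have hc1 : s (p+1) * seg s 0 p = seg s 0 p * s (p+1) :=
    comm_seg s (s (p+1)) (fun t ht => (hc (0+t) (p+1) (by omega) (by omega)).symm)
  calc s (p+1) * seg s 0 (p+1) * s (p+1)
      = (s (p+1) * seg s 0 p) * (s p * s (p+1)) := by
        rw [seg_succ, Nat.zero_add]; simp only [mul_assoc]
    _ = seg s 0 p * (s (p+1) * s p * s (p+1)) := by rw [hc1]; simp only [mul_assoc]
    _ = seg s 0 p * (s p * s (p+1) * s p) := by rw [hb p (by omega)]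
    _ = seg s 0 (p+1) * (s (p+1) * s p) := by
        rw [seg_succ, Nat.zero_add]; simp only [mul_assoc]

/-- `ρ_{m+1}^{k+1} = ρ_m^{k+1} (σ_m ⋯ σ_{m-k})` for `k ≤ m`. -/
lemma rho_pow {m : ℕ} : ∀ k, k ≤ m → m + 1 ≤ M →
    seg s 0 (m+1) ^ (k+1) = seg s 0 m ^ (k+1) * dseg s (m - k) (k+1) := by
  intro k
  induction k with
  | zero =>
      intro _ _
      rw [zero_add, pow_one, pow_one, Nat.sub_zero, dseg_one, seg_succ, Nat.zero_add]
  | succ k ih =>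
      intro hk hM
      have hd1 : dseg s (m-k) (k+1) = s m * dseg s (m-k) k := by
        rw [dseg_succ, show m - k + k = m by omega]
      have hd2 : dseg s (m-k) k * seg s 0 m = seg s 0 m * dseg s (m-k-1) k := by
        have h := dseg_mul_seg hb hc (m := m) (j := m-k-1) k (by omega) (by omega)
        rwa [show m - k - 1 + 1 = m - k by omega] at h
      have hd3 : s m * dseg s (m-k-1) k = dseg s (m-k-1) k * s m :=
        comm_dseg s (s m) (fun t ht => (hc (m-k-1+t) m (by omega) (by omega)).symm)
      have hk2 : s m * seg s 0 m * s m = seg s 0 m * (s m * s (m-1)) := by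
        have := key2 hb hc (p := m-1) (by omega)
        rwa [show m - 1 + 1 = m by omega] at this
      have hd4 : dseg s (m - (k+1)) (k+2) = s m * (s (m-1) * dseg s (m-k-1) k) := by
        rw [dseg_succ, show m - (k+1) + (k+1) = m by omega, dseg_succ,
          show m - (k+1) + k = m - 1 by omega, show m - (k+1) = m - k - 1 by omega]
      calc seg s 0 (m+1) ^ (k+2)
          = seg s 0 (m+1) ^ (k+1) * seg s 0 (m+1) := by rw [pow_succ]
        _ = seg s 0 m ^ (k+1) * (s m * dseg s (m-k) k) * (seg s 0 m * s m) := by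
            rw [ih (by omega) hM, hd1, seg_succ, Nat.zero_add]
        _ = seg s 0 m ^ (k+1) * (s m * (dseg s (m-k) k * seg s 0 m) * s m) := by
            simp only [mul_assoc]
        _ = seg s 0 m ^ (k+1) * (s m * seg s 0 m * (dseg s (m-k-1) k * s m)) := by
            rw [hd2]; simp only [mul_assoc]
        _ = seg s 0 m ^ (k+1) * ((s m * seg s 0 m * s m) * dseg s (m-k-1) k) := by
            rw [← hd3]; simp only [mul_assoc]
        _ = seg s 0 m ^ (k+1) * (seg s 0 m * (s m * (s (m-1) * dseg s (m-k-1) k))) := by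
            rw [hk2]; simp only [mul_assoc]
        _ = seg s 0 m ^ (k+2) * dseg s (m - (k+1)) (k+2) := by
            rw [hd4]; simp only [pow_succ, mul_assoc]

/-- `δ_{m+1} ρ_{m+1}` commutes with `σ_i` for `i ≤ m - 1`. -/
lemma loop_comm {m i : ℕ} (hi : i + 1 ≤ m) (hM : m + 1 ≤ M) :
    s i * (dseg s 0 (m+1) * seg s 0 (m+1)) = (dseg s 0 (m+1) * seg s 0 (m+1)) * s i := by
  have h1 : s i * dseg s 0 (m+1) = dseg s 0 (m+1) * s (i+1) :=
    dseg_shift hb hc (by omega) (by omega)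
  have h2 : seg s 0 (m+1) * s i = s (i+1) * seg s 0 (m+1) :=
    seg_shift hb hc (by omega) (by omega)
  rw [← mul_assoc, h1, mul_assoc, ← h2, mul_assoc]

/-- The key identity `Δ_m² = ρ_m^m` (i.e. `h_n² = z_n`). -/
lemma htw_sq {m : ℕ} : m ≤ M → htw s m ^ 2 = seg s 0 m ^ (m+1) := by
  induction m with
  | zero => intro _; simp
  | succ m ih =>
      intro hM
      have h1 : htw s (m+1) = seg s 0 (m+1) * htw s m := htw_succ_eq hb hc hM
      have h2 : htw s (m+1) * seg s 0 (m+1) = dseg s 0 (m+1) * htw s (m+1) := by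
        have := htw_mul_seg hb hc (m := m+1) (m+1) le_rfl hM
        rwa [Nat.sub_self] at this
      have hcom : Commute (dseg s 0 (m+1) * seg s 0 (m+1)) (seg s 0 m) :=
        comm_seg s _ (fun t ht => (loop_comm hb hc (i := 0 + t) (by omega) hM).symm)
      have h3 : seg s 0 m ^ (m+1) * (dseg s 0 (m+1) * seg s 0 (m+1))
          = (dseg s 0 (m+1) * seg s 0 (m+1)) * seg s 0 m ^ (m+1) :=
        ((hcom.pow_right (m+1)).symm).eq
      have h4 : seg s 0 (m+1) ^ (m+2) = seg s 0 m ^ (m+1) * (dseg s 0 (m+1) * seg s 0 (m+1)) := by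
        have := rho_pow hb hc (m := m) m le_rfl hM
        rw [Nat.sub_self] at this
        rw [pow_succ, this, mul_assoc]
      calc htw s (m+1) ^ 2 = htw s (m+1) * (seg s 0 (m+1) * htw s m) := by
            rw [sq]; conv_rhs => rw [← h1]
        _ = (dseg s 0 (m+1) * htw s (m+1)) * htw s m := by
            rw [← mul_assoc, h2]
        _ = dseg s 0 (m+1) * (seg s 0 (m+1) * (htw s m * htw s m)) := by
            rw [h1]; simp only [mul_assoc]
        _ = (dseg s 0 (m+1) * seg s 0 (m+1)) * seg s 0 m ^ (m+1) := by
            rw [← sq, ih (by omega)]; simp only [mul_assoc]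
        _ = seg s 0 (m+1) ^ (m+2) := by rw [h4, h3]

end Rels

end BraidAux


/-- From elements satisfying the dihedral relations we get a morphism from `DihedralGroup n`. -/
lemma dihedral_hom_of_rels {H : Type*} [Group H] {n : ℕ} (R S : H)
    (hR : R ^ n = 1) (hS : S ^ 2 = 1) (hSR : (S * R⁻¹) ^ 2 = 1) :
    ∃ ψ : DihedralGroup n →* H, ψ (DihedralGroup.r 1) = R ∧ ψ (DihedralGroup.sr 0) = S := by
  have hS' : S⁻¹ = S := by
    rw [sq] at hS
    exact inv_eq_of_mul_eq_one_left hS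
  have hconj : S * R * S⁻¹ = R⁻¹ := by
    have h1 : S * R⁻¹ * S = R := by
      have := hSR
      rw [sq] at this
      -- S * R⁻¹ * (S * R⁻¹) = 1
      calc S * R⁻¹ * S = S * R⁻¹ * (S * R⁻¹) * R := by group
        _ = R := by rw [this, one_mul]
    have h2 : (S * R⁻¹ * S)⁻¹ = R⁻¹ := by rw [h1]
    rw [mul_inv_rev, mul_inv_rev, inv_inv, hS'] at h2
    rw [hS', mul_assoc]
    exact h2
  set f : ℤ →+ Additive H :=
    { toFun := fun z => Additive.ofMul (R ^ z)
      map_zero' := by simp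
      map_add' := by intro a b; simp [zpow_add] } with hf
  have hfn : f (n : ℤ) = 0 := by
    simp only [hf, AddMonoidHom.coe_mk, ZeroHom.coe_mk, zpow_natCast, hR]
    rfl
  set Φ : ZMod n → H := fun i => Additive.toMul (ZMod.lift n ⟨f, hfn⟩ i) with hΦ
  have hΦint : ∀ z : ℤ, Φ (z : ZMod n) = R ^ z := by
    intro z
    simp [hΦ, ZMod.lift_coe, hf]
  have hΦadd : ∀ i j : ZMod n, Φ (i + j) = Φ i * Φ j := by
    intro i j
    simp [hΦ, map_add]
  have hΦone : Φ 1 = R := by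
    have := hΦint 1
    rwa [Int.cast_one, zpow_one] at this
  have hΦzero : Φ 0 = 1 := by
    have := hΦint 0
    rwa [Int.cast_zero, zpow_zero] at this
  have hconjΦ : ∀ i : ZMod n, S * Φ i = Φ (-i) * S := by
    intro i
    obtain ⟨z, rfl⟩ := ZMod.intCast_surjective i
    rw [hΦint, ← Int.cast_neg, hΦint]
    have h1 : S * R ^ z * S⁻¹ = R ^ (-z) := by
      rw [← conj_zpow, hconj, inv_zpow, zpow_neg]
    calc S * R ^ z = (S * R ^ z * S⁻¹) * S := by group
      _ = R ^ (-z) * S := by rw [h1]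
  have hΦS : ∀ i : ZMod n, Φ i * S = S * Φ (-i) := by
    intro i
    rw [hconjΦ (-i), neg_neg]
  refine ⟨MonoidHom.mk' (fun g => match g with
    | DihedralGroup.r i => Φ i
    | DihedralGroup.sr i => S * Φ i) ?_, ?_, ?_⟩
  · rintro (i | i) (j | j)
    · show Φ (i + j) = Φ i * Φ j
      exact hΦadd i j
    · show S * Φ (j - i) = Φ i * (S * Φ j)
      rw [← mul_assoc, hΦS i, mul_assoc, ← hΦadd, sub_eq_neg_add]
    · show S * Φ (i + j) = (S * Φ i) * Φ j
      rw [hΦadd, mul_assoc]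
    · show Φ (j - i) = (S * Φ i) * (S * Φ j)
      have e1 : (S * Φ i) * (S * Φ j) = (S * (Φ i * S)) * Φ j := by group
      rw [e1, hΦS i]
      have e2 : (S * (S * Φ (-i))) * Φ j = (S * S) * (Φ (-i) * Φ j) := by group
      rw [e2, ← sq, hS, one_mul, ← hΦadd, sub_eq_neg_add]
  · exact hΦone
  · show S * Φ 0 = S
    rw [hΦzero, mul_one]

namespace BraidInst

open BraidAux

lemma braidRel_one {m : ℕ} {r : FreeGroup (Fin m)} (hr : r ∈ braidRels m) :
    PresentedGroup.mk (braidRels m) r = 1 :=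
  (QuotientGroup.eq_one_iff r).mpr (Subgroup.subset_normalClosure hr)

lemma braidGen_braid (n : ℕ) : ∀ i, i + 2 ≤ n - 1 →
    braidGen n i * braidGen n (i+1) * braidGen n i
      = braidGen n (i+1) * braidGen n i * braidGen n (i+1) := by
  intro i hi
  have h1 : i < n - 1 := by omega
  have h2 : i + 1 < n - 1 := by omega
  have hr : (FreeGroup.of (⟨i, h1⟩ : Fin (n-1)) * FreeGroup.of (⟨i+1, h2⟩ : Fin (n-1)) *
      FreeGroup.of (⟨i, h1⟩ : Fin (n-1)) *
      (FreeGroup.of (⟨i+1, h2⟩ : Fin (n-1)) * FreeGroup.of (⟨i, h1⟩ : Fin (n-1)) *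
        FreeGroup.of (⟨i+1, h2⟩ : Fin (n-1)))⁻¹) ∈ braidRels (n-1) :=
    ⟨⟨i, h1⟩, ⟨i+1, h2⟩, Or.inl ⟨rfl, rfl⟩⟩
  have h := braidRel_one hr
  rw [map_mul, map_mul, map_inv, map_mul, map_mul, mul_inv_eq_one] at h
  rw [braidGen, braidGen, dif_pos h1, dif_pos h2]
  exact h

lemma braidGen_comm (n : ℕ) : ∀ i j, i + 2 ≤ j → j < n - 1 →
    braidGen n i * braidGen n j = braidGen n j * braidGen n i := by
  intro i j hij hj
  by_cases h1 : i < n - 1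
  · have hr : (FreeGroup.of (⟨i, h1⟩ : Fin (n-1)) * FreeGroup.of (⟨j, hj⟩ : Fin (n-1)) *
        (FreeGroup.of (⟨j, hj⟩ : Fin (n-1)) * FreeGroup.of (⟨i, h1⟩ : Fin (n-1)))⁻¹)
        ∈ braidRels (n-1) :=
      ⟨⟨i, h1⟩, ⟨j, hj⟩, Or.inr ⟨by simpa using by omega, rfl⟩⟩
    have h := braidRel_one hr
    rw [map_mul, map_inv, map_mul, mul_inv_eq_one] at h
    rw [braidGen, braidGen, dif_pos h1, dif_pos hj]
    exact h
  · rw [braidGen, dif_neg h1, one_mul, mul_one]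

lemma braidRho_eq (n : ℕ) : braidRho n = seg (braidGen n) 0 (n-1) := by
  simp [braidRho, seg]

lemma halfTwist_eq (n : ℕ) : halfTwist n = htw (braidGen n) (n-1) := by
  simp [halfTwist, htw, dseg]

lemma sphereRel_eq (n : ℕ) :
    sphereRel n = seg (braidGen n) 0 (n-1) * dseg (braidGen n) 0 (n-1) := by
  simp [sphereRel, braidRho_eq, dseg]

lemma fullTwist_eq (n : ℕ) : fullTwist n = seg (braidGen n) 0 (n-1) ^ n := by
  rw [fullTwist, braidRho_eq]

/-- `h_n² = z_n` in the braid group. -/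
lemma halfTwist_sq (n : ℕ) : halfTwist n ^ 2 = fullTwist n := by
  rcases n with _ | m
  · simp [halfTwist, fullTwist, braidRho]
  · have hb : ∀ i, i + 2 ≤ m → braidGen (m+1) i * braidGen (m+1) (i+1) * braidGen (m+1) i
        = braidGen (m+1) (i+1) * braidGen (m+1) i * braidGen (m+1) (i+1) :=
      fun i hi => braidGen_braid (m+1) i (by omega)
    have hc : ∀ i j, i + 2 ≤ j → j < m →
        braidGen (m+1) i * braidGen (m+1) j = braidGen (m+1) j * braidGen (m+1) i :=
      fun i j h1 h2 => braidGen_comm (m+1) i j h1 (by omega)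
    have h := htw_sq hb hc (le_refl m)
    rw [halfTwist_eq, fullTwist_eq]
    simpa using h

end BraidInst

/-- In `Γ_{0,n}`, the images `s̄` of the half twist `h_n` and `r̄` of `ρ = σ_1⋯σ_{n-1}`
satisfy `s̄² = r̄ⁿ = (s̄ r̄⁻¹)² = 1`; consequently there is a morphism from the dihedral
group `D_n` to `Γ_{0,n}` with `r ↦ r̄` and `s ↦ s̄`. -/
theorem dihedral_to_mcg (n : ℕ) :
    (QuotientGroup.mk (halfTwist n) : MCG0 n) ^ 2 = 1 ∧
    (QuotientGroup.mk (braidRho n) : MCG0 n) ^ n = 1 ∧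
    ((QuotientGroup.mk (halfTwist n) : MCG0 n) *
        (QuotientGroup.mk (braidRho n) : MCG0 n)⁻¹) ^ 2 = 1 ∧
    ∃ ψ : DihedralGroup n →* MCG0 n,
      ψ (DihedralGroup.r 1) = QuotientGroup.mk (braidRho n) ∧
      ψ (DihedralGroup.sr 0) = QuotientGroup.mk (halfTwist n) := by
  classical
  set N := Subgroup.normalClosure {fullTwist n, sphereRel n} with hN
  let φ : BraidGroup n →* MCG0 n := QuotientGroup.mk' N
  have hφ : ∀ x : BraidGroup n, (QuotientGroup.mk x : MCG0 n) = φ x := fun _ => rfl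
  have hft : φ (fullTwist n) = 1 :=
    (QuotientGroup.eq_one_iff _).mpr (Subgroup.subset_normalClosure (by simp))
  have hsp : φ (sphereRel n) = 1 :=
    (QuotientGroup.eq_one_iff _).mpr (Subgroup.subset_normalClosure (by simp))
  have goal1 : (QuotientGroup.mk (halfTwist n) : MCG0 n) ^ 2 = 1 := by
    rw [hφ, ← map_pow, BraidInst.halfTwist_sq, hft]
  have goal2 : (QuotientGroup.mk (braidRho n) : MCG0 n) ^ n = 1 := by
    rw [hφ, ← map_pow]
    exact hft
  have goal3 : ((QuotientGroup.mk (halfTwist n) : MCG0 n) *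
      (QuotientGroup.mk (braidRho n) : MCG0 n)⁻¹) ^ 2 = 1 := by
    rcases n with _ | _ | m
    · have h1 : halfTwist 0 = 1 := by simp [halfTwist]
      have h2 : braidRho 0 = 1 := by simp [braidRho]
      simp [h1, h2]
    · have h1 : halfTwist 1 = 1 := by simp [halfTwist]
      have h2 : braidRho 1 = 1 := by simp [braidRho]
      simp [h1, h2]
    · -- the interesting case `n = m + 2`
      have hb : ∀ i, i + 2 ≤ m + 1 →
          braidGen (m+2) i * braidGen (m+2) (i+1) * braidGen (m+2) i
            = braidGen (m+2) (i+1) * braidGen (m+2) i * braidGen (m+2) (i+1) :=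
        fun i hi => BraidInst.braidGen_braid (m+2) i (by omega)
      have hc : ∀ i j, i + 2 ≤ j → j < m + 1 →
          braidGen (m+2) i * braidGen (m+2) j = braidGen (m+2) j * braidGen (m+2) i :=
        fun i j h1 h2 => BraidInst.braidGen_comm (m+2) i j h1 (by omega)
      have hG1 : halfTwist (m+2) = braidRho (m+2) * BraidAux.htw (braidGen (m+2)) m := by
        rw [BraidInst.halfTwist_eq, BraidInst.braidRho_eq]
        exact BraidAux.htw_succ_eq hb hc (le_refl (m+1))
      have hK : (halfTwist (m+2) * (braidRho (m+2))⁻¹) ^ 2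
          = braidRho (m+2) * (BraidAux.seg (braidGen (m+2)) 0 m ^ (m+1)) *
              (braidRho (m+2))⁻¹ := by
        rw [hG1]
        have hsq : BraidAux.htw (braidGen (m+2)) m ^ 2
            = BraidAux.seg (braidGen (m+2)) 0 m ^ (m+1) := BraidAux.htw_sq hb hc (by omega)
        rw [← hsq, sq, sq]
        group
      have hP : braidRho (m+2) ^ (m+1)
          = BraidAux.seg (braidGen (m+2)) 0 m ^ (m+1) *
              BraidAux.dseg (braidGen (m+2)) 0 (m+1) := by
        rw [BraidInst.braidRho_eq]
        have h := BraidAux.rho_pow hb hc (m := m) m le_rfl (le_refl (m+1))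
        rwa [Nat.sub_self] at h
      have hRD : φ (braidRho (m+2)) * φ (BraidAux.dseg (braidGen (m+2)) 0 (m+1)) = 1 := by
        rw [← map_mul]
        have h : braidRho (m+2) * BraidAux.dseg (braidGen (m+2)) 0 (m+1) = sphereRel (m+2) := by
          rw [BraidInst.sphereRel_eq, BraidInst.braidRho_eq]
          rfl
        rw [h]
        exact hsp
      have hDq : φ (BraidAux.dseg (braidGen (m+2)) 0 (m+1)) = (φ (braidRho (m+2)))⁻¹ := by
        rw [← one_mul (φ (BraidAux.dseg (braidGen (m+2)) 0 (m+1))),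
          ← inv_mul_cancel (φ (braidRho (m+2))), mul_assoc, hRD, mul_one]
      have hX : φ (BraidAux.seg (braidGen (m+2)) 0 m ^ (m+1)) = 1 := by
        have h5 := congrArg φ hP
        rw [map_mul, hDq] at h5
        have h6 : φ (braidRho (m+2) ^ (m+1)) * φ (braidRho (m+2)) = 1 := by
          rw [← map_mul, ← pow_succ]
          exact hft
        calc φ (BraidAux.seg (braidGen (m+2)) 0 m ^ (m+1))
            = φ (braidRho (m+2) ^ (m+1)) * φ (braidRho (m+2)) := by rw [h5]; group
          _ = 1 := h6
      rw [hφ, hφ, ← map_inv, ← map_mul, ← map_pow, hK, map_mul, map_mul, hX, mul_one,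
        map_inv, mul_inv_cancel]
  obtain ⟨ψ, hψ1, hψ2⟩ := dihedral_hom_of_rels (QuotientGroup.mk (braidRho n))
    (QuotientGroup.mk (halfTwist n)) goal2 goal1 goal3
  exact ⟨goal1, goal2, goal3, ψ, hψ1, hψ2⟩
end

section
/- In the braid group of the sphere, i.e. the quotient B_n/⟨⟨σ_1σ_2⋯σ_{n-1}^2⋯σ_2σ_1⟩⟩, the relation (σ_1⋯σ_{n-1})^{2n} = 1 holds. -/
namespace SphereBraidAux

variable {n : ℕ}

lemma rel_one {r : FreeGroup (Fin (n - 1))} (h : r ∈ braidRels (n - 1)) :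
    PresentedGroup.mk (braidRels (n - 1)) r = (1 : BraidGroup n) := by
  have : r ∈ Subgroup.normalClosure (braidRels (n - 1)) :=
    Subgroup.subset_normalClosure h
  exact (QuotientGroup.eq_one_iff r).mpr this

lemma gen_eq {i : ℕ} (hi : i < n - 1) :
    braidGen n i = PresentedGroup.mk (braidRels (n-1)) (FreeGroup.of ⟨i, hi⟩) := by
  rw [braidGen, dif_pos hi]; rfl

/-- braid relation, in-range version -/
lemma braid_rel {i : ℕ} (h : i + 1 < n - 1) :
    braidGen n i * braidGen n (i+1) * braidGen n i
      = braidGen n (i+1) * braidGen n i * braidGen n (i+1) := by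
  have hi : i < n - 1 := lt_trans (Nat.lt_succ_self i) h
  have key : PresentedGroup.mk (braidRels (n-1))
      (FreeGroup.of (⟨i, hi⟩ : Fin (n-1)) * FreeGroup.of (⟨i+1, h⟩ : Fin (n-1)) *
        FreeGroup.of ⟨i, hi⟩ *
        (FreeGroup.of (⟨i+1, h⟩ : Fin (n-1)) * FreeGroup.of (⟨i, hi⟩ : Fin (n-1)) *
        FreeGroup.of ⟨i+1, h⟩)⁻¹) = 1 := by
    apply rel_one
    exact ⟨⟨i, hi⟩, ⟨i+1, h⟩, Or.inl ⟨rfl, rfl⟩⟩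
  rw [map_mul, map_mul, map_mul, map_inv, map_mul, map_mul, mul_inv_eq_one] at key
  rw [gen_eq hi, gen_eq h]
  exact key

/-- commuting relation; holds without upper range hypothesis since out-of-range gens are 1 -/
lemma comm_rel {i j : ℕ} (h : i + 1 < j) :
    braidGen n i * braidGen n j = braidGen n j * braidGen n i := by
  by_cases hj : j < n - 1
  · have hi : i < n - 1 := lt_trans (lt_trans (Nat.lt_succ_self i) h) hj
    have key : PresentedGroup.mk (braidRels (n-1))
        (FreeGroup.of (⟨i, hi⟩ : Fin (n-1)) * FreeGroup.of (⟨j, hj⟩ : Fin (n-1)) *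
          (FreeGroup.of (⟨j, hj⟩ : Fin (n-1)) * FreeGroup.of (⟨i, hi⟩ : Fin (n-1)))⁻¹) = 1 := by
      apply rel_one
      exact ⟨⟨i, hi⟩, ⟨j, hj⟩, Or.inr ⟨h, rfl⟩⟩
    rw [map_mul, map_inv, map_mul, mul_inv_eq_one] at key
    rw [gen_eq hi, gen_eq hj]
    exact key
  · simp [braidGen, hj]

/-- ascending word `σ_0 σ_1 ⋯ σ_{m-1}` -/
def A (n : ℕ) : ℕ → BraidGroup n
  | 0 => 1
  | m+1 => A n m * braidGen n m

/-- descending word `σ_{a+k-1} ⋯ σ_{a+1} σ_a` -/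
def E (n : ℕ) (a : ℕ) : ℕ → BraidGroup n
  | 0 => 1
  | k+1 => E n (a+1) k * braidGen n a

/-- half twist word `Δ_m = ρ_{m-1} ρ_{m-2} ⋯ ρ_1` -/
def Del (n : ℕ) : ℕ → BraidGroup n
  | 0 => 1
  | m+1 => A n m * Del n m

lemma E_succ_top : ∀ a k : ℕ, E n a (k+1) = braidGen n (a+k) * E n a k := by
  intro a k
  induction k generalizing a with
  | zero =>
      rw [show E n a (0+1) = E n (a+1) 0 * braidGen n a from rfl,
        show E n (a+1) 0 = (1:BraidGroup n) from rfl, one_mul,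
        show E n a 0 = (1:BraidGroup n) from rfl, mul_one, Nat.add_zero]
  | succ k ih =>
      rw [show E n a (k+1+1) = E n (a+1) (k+1) * braidGen n a from rfl, ih (a+1),
        show E n a (k+1) = E n (a+1) k * braidGen n a from rfl,
        show a+1+k = a+(k+1) from by omega, mul_assoc]

lemma E_one (a : ℕ) : E n a 1 = braidGen n a := by
  rw [show E n a 1 = E n (a+1) 0 * braidGen n a from rfl,
    show E n (a+1) 0 = (1:BraidGroup n) from rfl, one_mul]

lemma E_two (a : ℕ) : E n a (1+1) = braidGen n (a+1) * braidGen n a := by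
  rw [show E n a (1+1) = E n (a+1) 1 * braidGen n a from rfl, E_one]

lemma comm_A {m j : ℕ} (h : m < j) : A n m * braidGen n j = braidGen n j * A n m := by
  induction m with
  | zero => simp [A]
  | succ m ih =>
      have h1 : m < j := lt_trans (Nat.lt_succ_self m) h
      rw [A, mul_assoc, comm_rel h, ← mul_assoc, ih h1, mul_assoc]

lemma comm_E {a k j : ℕ} (h : a + k < j) :
    E n a k * braidGen n j = braidGen n j * E n a k := by
  induction k generalizing a with
  | zero => simp [E]
  | succ k ih =>
      have h1 : a + 1 + k < j := by omega
      have h2 : a + 1 < j := by omega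
      rw [E, mul_assoc, comm_rel h2, ← mul_assoc, ih h1, mul_assoc]

lemma comm_Del {m j : ℕ} (h : m ≤ j) :
    Del n m * braidGen n j = braidGen n j * Del n m := by
  induction m with
  | zero => simp [Del]
  | succ m ih =>
      have h1 : m ≤ j := le_trans (Nat.le_succ m) h
      rw [Del, mul_assoc, ih h1, ← mul_assoc, comm_A (by omega), mul_assoc]

/-- the shift lemma: `ρ_m σ_i = σ_{i+1} ρ_m` for `i+2 ≤ m ≤ n-1`. -/
lemma shift {i m : ℕ} (h2 : i + 2 ≤ m) (hm : m ≤ n - 1) :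
    A n m * braidGen n i = braidGen n (i+1) * A n m := by
  induction m with
  | zero => omega
  | succ m ih =>
      rcases Nat.lt_or_ge (i+2) (m+1) with hc | hc
      · have hcm : i + 1 < m := by omega
        rw [A, mul_assoc, ← comm_rel hcm, ← mul_assoc, ih (by omega) (by omega), mul_assoc]
      · have hmi : m = i + 1 := by omega
        subst hmi
        have hbr : i + 1 < n - 1 := by omega
        calc A n (i+1+1) * braidGen n i
            = A n i * (braidGen n i * braidGen n (i+1) * braidGen n i) := by
              rw [show A n (i+1+1) = A n i * braidGen n i * braidGen n (i+1) from rfl]; group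
          _ = A n i * (braidGen n (i+1) * braidGen n i * braidGen n (i+1)) := by
              rw [braid_rel hbr]
          _ = (A n i * braidGen n (i+1)) * (braidGen n i * braidGen n (i+1)) := by group
          _ = (braidGen n (i+1) * A n i) * (braidGen n i * braidGen n (i+1)) := by
              rw [comm_A (Nat.lt_succ_self i)]
          _ = braidGen n (i+1) * A n (i+1+1) := by
              rw [show A n (i+1+1) = A n i * braidGen n i * braidGen n (i+1) from rfl]; group

/-- the J ladder: `(σ_t ⋯ σ_{b+1}) ρ_t σ_t = ρ_t (σ_t ⋯ σ_b)`, for `b + k = t ≤ n-2`. -/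
lemma Jlem : ∀ k b t : ℕ, 1 ≤ k → b + k = t → t + 1 ≤ n - 1 →
    E n (b+1) k * A n t * braidGen n t = A n t * E n b (k+1) := by
  intro k
  induction k with
  | zero => intro b t h1 _ _; exact absurd h1 (by omega)
  | succ k ih =>
      intro b t _ hbk ht
      rcases Nat.eq_zero_or_pos k with rfl | hk
      · simp only [Nat.zero_add] at hbk ⊢
        have hbt : b + 1 = t := by omega
        subst hbt
        have hbr : b + 1 < n - 1 := by omega
        have hA1 : braidGen n (b+1) * A n b = A n b * braidGen n (b+1) :=
          (comm_A (Nat.lt_succ_self b)).symm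
        have hb3 := braid_rel hbr
        rw [E_one, E_two]
        calc braidGen n (b+1) * A n (b+1) * braidGen n (b+1)
            = (braidGen n (b+1) * A n b) * (braidGen n b * braidGen n (b+1)) := by
              rw [show A n (b+1) = A n b * braidGen n b from rfl]; group
          _ = (A n b * braidGen n (b+1)) * (braidGen n b * braidGen n (b+1)) := by rw [hA1]
          _ = A n b * (braidGen n (b+1) * braidGen n b * braidGen n (b+1)) := by group
          _ = A n b * (braidGen n b * braidGen n (b+1) * braidGen n b) := by rw [← hb3]
          _ = (A n b * braidGen n b) * (braidGen n (b+1) * braidGen n b) := by group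
          _ = A n (b+1) * (braidGen n (b+1) * braidGen n b) := by
              rw [show A n (b+1) = A n b * braidGen n b from rfl]
      · have hE1 : E n (b+1) (k+1) = E n (b+1+1) k * braidGen n (b+1) := rfl
        have hE2 : E n b (k+1+1) = E n (b+1) (k+1) * braidGen n b := rfl
        have hsh : A n t * braidGen n b = braidGen n (b+1) * A n t :=
          shift (by omega) (by omega)
        have hcomm : braidGen n b * braidGen n t = braidGen n t * braidGen n b :=
          comm_rel (by omega)
        have ihh := ih (b+1) t hk (by omega) ht
        calc E n (b+1) (k+1) * A n t * braidGen n t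
            = E n (b+1+1) k * (braidGen n (b+1) * A n t) * braidGen n t := by
              rw [hE1]; group
          _ = E n (b+1+1) k * (A n t * braidGen n b) * braidGen n t := by rw [← hsh]
          _ = E n (b+1+1) k * A n t * (braidGen n b * braidGen n t) := by group
          _ = E n (b+1+1) k * A n t * (braidGen n t * braidGen n b) := by rw [hcomm]
          _ = (E n (b+1+1) k * A n t * braidGen n t) * braidGen n b := by group
          _ = (A n t * E n (b+1) (k+1)) * braidGen n b := by rw [ihh]
          _ = A n t * E n b (k+1+1) := by rw [hE2]; group

/-- the H ladder: `(ρ_{t+1})^k = (ρ_t)^k (σ_t ⋯ σ_{t-k+1})`, for `k ≤ t+1 ≤ n-1`. -/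
lemma Hlem : ∀ k b t : ℕ, b + k = t + 1 → t + 1 ≤ n - 1 →
    (A n (t+1))^k = (A n t)^k * E n b k := by
  intro k
  induction k with
  | zero =>
      intro b t _ _
      simp [show E n b 0 = (1:BraidGroup n) from rfl]
  | succ k ih =>
      intro b t hb ht
      rcases Nat.eq_zero_or_pos k with rfl | hk
      · simp only [Nat.zero_add] at hb ⊢
        have hbt : b = t := by omega
        subst hbt
        rw [pow_one, pow_one, E_one]
        rfl
      · have ihh := ih (b+1) t (by omega) ht
        calc (A n (t+1))^(k+1) = (A n (t+1))^k * A n (t+1) := pow_succ _ _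
          _ = ((A n t)^k * E n (b+1) k) * (A n t * braidGen n t) := by
              rw [ihh, show A n (t+1) = A n t * braidGen n t from rfl]
          _ = (A n t)^k * (E n (b+1) k * A n t * braidGen n t) := by group
          _ = (A n t)^k * (A n t * E n b (k+1)) := by rw [Jlem k b t hk (by omega) ht]
          _ = (A n t)^(k+1) * E n b (k+1) := by rw [pow_succ]; group

/-- `Δ_{m+1} = Δ_m · (σ_{m-1} ⋯ σ_0)` (the other recursion for the half twist). -/
lemma Done : ∀ m, Del n (m+1) = Del n m * E n 0 m := by
  intro m
  induction m with
  | zero => rfl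
  | succ m ih =>
      have hE : E n 0 (m+1) = braidGen n m * E n 0 m := by
        rw [E_succ_top, Nat.zero_add]
      calc Del n (m+1+1)
          = (A n m * braidGen n m) * (Del n m * E n 0 m) := by
            rw [show Del n (m+1+1) = A n (m+1) * Del n (m+1) from rfl, ih,
              show A n (m+1) = A n m * braidGen n m from rfl]
        _ = A n m * (braidGen n m * Del n m) * E n 0 m := by group
        _ = A n m * (Del n m * braidGen n m) * E n 0 m := by
            rw [← comm_Del (le_refl m)]
        _ = (A n m * Del n m) * (braidGen n m * E n 0 m) := by group
        _ = Del n (m+1) * E n 0 (m+1) := by rw [hE]; rfl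

/-- `σ_p (σ_{p+1} σ_p ⋯ σ_0) = (σ_{p+1} ⋯ σ_0) σ_{p+1}` -/
lemma Slem {p : ℕ} (hp : p + 1 + 1 ≤ n - 1) :
    braidGen n p * E n 0 (p+1+1) = E n 0 (p+1+1) * braidGen n (p+1) := by
  have e2 : E n 0 (p+1+1) = braidGen n (p+1) * (braidGen n p * E n 0 p) := by
    rw [E_succ_top 0 (p+1), E_succ_top 0 p, Nat.zero_add, Nat.zero_add]
  have hbr : p + 1 < n - 1 := by omega
  have hcE : E n 0 p * braidGen n (p+1) = braidGen n (p+1) * E n 0 p :=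
    comm_E (by omega)
  rw [e2]
  calc braidGen n p * (braidGen n (p+1) * (braidGen n p * E n 0 p))
      = (braidGen n p * braidGen n (p+1) * braidGen n p) * E n 0 p := by group
    _ = (braidGen n (p+1) * braidGen n p * braidGen n (p+1)) * E n 0 p := by
        rw [braid_rel hbr]
    _ = braidGen n (p+1) * braidGen n p * (braidGen n (p+1) * E n 0 p) := by group
    _ = braidGen n (p+1) * braidGen n p * (E n 0 p * braidGen n (p+1)) := by rw [← hcE]
    _ = braidGen n (p+1) * (braidGen n p * E n 0 p) * braidGen n (p+1) := by group

/-- the reflection property of the half twist: `Δ_m σ_i = σ_j Δ_m` for `i + j + 2 = m ≤ n`. -/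
lemma Dtwo : ∀ m, m ≤ n → ∀ i j, i + j + 2 = m →
    Del n m * braidGen n i = braidGen n j * Del n m := by
  intro m
  induction m with
  | zero => intro _ i j hij; exact absurd hij (by omega)
  | succ m ih =>
      intro hm i j hij
      rcases Nat.eq_zero_or_pos j with rfl | hj
      · rcases Nat.eq_zero_or_pos i with rfl | hi
        · have hm1 : m = 1 := by omega
          subst hm1
          have e : Del n (1+1) = braidGen n 0 := by
            rw [show Del n (1+1) = A n 1 * Del n 1 from rfl,
              show Del n 1 = A n 0 * Del n 0 from rfl,
              show A n 1 = A n 0 * braidGen n 0 from rfl,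
              show A n 0 = (1:BraidGroup n) from rfl,
              show Del n 0 = (1:BraidGroup n) from rfl]
            group
          rw [e]
        · obtain ⟨i', rfl⟩ : ∃ i', i = i' + 1 := ⟨i - 1, by omega⟩
          have him : m = i' + 1 + 1 := by omega
          subst him
          have ihh : Del n (i'+1+1) * braidGen n i' = braidGen n 0 * Del n (i'+1+1) :=
            ih (by omega) i' 0 (by omega)
          have hS : braidGen n i' * E n 0 (i'+1+1) = E n 0 (i'+1+1) * braidGen n (i'+1) :=
            Slem (by omega)
          have h2 := Done (n := n) (i'+1+1)
          calc Del n (i'+1+1+1) * braidGen n (i'+1)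
              = Del n (i'+1+1) * (E n 0 (i'+1+1) * braidGen n (i'+1)) := by
                rw [h2]; group
            _ = Del n (i'+1+1) * (braidGen n i' * E n 0 (i'+1+1)) := by rw [← hS]
            _ = (Del n (i'+1+1) * braidGen n i') * E n 0 (i'+1+1) := by group
            _ = (braidGen n 0 * Del n (i'+1+1)) * E n 0 (i'+1+1) := by rw [ihh]
            _ = braidGen n 0 * Del n (i'+1+1+1) := by rw [h2]; group
      · obtain ⟨j', rfl⟩ : ∃ j', j = j' + 1 := ⟨j - 1, by omega⟩
        have hij' : i + j' + 2 = m := by omega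
        have hsh : A n m * braidGen n j' = braidGen n (j'+1) * A n m :=
          shift (by omega) (by omega)
        calc Del n (m+1) * braidGen n i
            = A n m * (Del n m * braidGen n i) := by
              rw [show Del n (m+1) = A n m * Del n m from rfl]; group
          _ = A n m * (braidGen n j' * Del n m) := by rw [ih (by omega) i j' hij']
          _ = (A n m * braidGen n j') * Del n m := by group
          _ = (braidGen n (j'+1) * A n m) * Del n m := by rw [hsh]
          _ = braidGen n (j'+1) * Del n (m+1) := by
              rw [show Del n (m+1) = A n m * Del n m from rfl]; group

/-- `Δ_{m+1}² = (ρ_m)^{m+1}` for `m ≤ n - 1`. -/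
lemma Dsq : ∀ m, m ≤ n - 1 → Del n (m+1) * Del n (m+1) = (A n m)^(m+1) := by
  intro m
  induction m with
  | zero =>
      intro _
      rw [show Del n (0+1) = A n 0 * Del n 0 from rfl,
        show A n 0 = (1:BraidGroup n) from rfl,
        show Del n 0 = (1:BraidGroup n) from rfl, pow_one]
      group
  | succ m ih =>
      intro hm
      have hG : (A n (m+1))^(m+1) = (A n m)^(m+1) * E n 0 (m+1) :=
        Hlem (m+1) 0 m (by omega) (by omega)
      have h1 : Del n (m+1+1) = A n (m+1) * Del n (m+1) := rfl
      have h2 := Done (n := n) (m+1)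
      have e3 : A n (m+1) * Del n (m+1) = Del n (m+1) * E n 0 (m+1) := h1.symm.trans h2
      calc Del n (m+1+1) * Del n (m+1+1)
          = (A n (m+1) * Del n (m+1)) * (Del n (m+1) * E n 0 (m+1)) := by
            rw [h2]; nth_rw 1 [← e3]
        _ = A n (m+1) * (Del n (m+1) * Del n (m+1)) * E n 0 (m+1) := by group
        _ = A n (m+1) * (A n m)^(m+1) * E n 0 (m+1) := by rw [ih (by omega)]
        _ = A n (m+1) * (A n (m+1))^(m+1) := by rw [hG]; group
        _ = (A n (m+1))^(m+1+1) := (pow_succ' _ _).symm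

/-- `Δ_n ρ_k = (σ_{n-2} ⋯ σ_{n-1-k}) Δ_n`. -/
lemma Icomm : ∀ k a : ℕ, a + k = n - 1 → Del n n * A n k = E n a k * Del n n := by
  intro k
  induction k with
  | zero =>
      intro a _
      rw [show A n 0 = (1:BraidGroup n) from rfl, show E n a 0 = (1:BraidGroup n) from rfl,
        mul_one, one_mul]
  | succ k ih =>
      intro a ha
      have hD : Del n n * braidGen n k = braidGen n a * Del n n :=
        Dtwo n (le_refl n) k a (by omega)
      calc Del n n * A n (k+1)
          = (Del n n * A n k) * braidGen n k := by
            rw [show A n (k+1) = A n k * braidGen n k from rfl]; group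
        _ = (E n (a+1) k * Del n n) * braidGen n k := by rw [ih (a+1) (by omega)]
        _ = E n (a+1) k * (braidGen n a * Del n n) := by rw [mul_assoc, hD]
        _ = E n a (k+1) * Del n n := by
            rw [show E n a (k+1) = E n (a+1) k * braidGen n a from rfl]; group

lemma rho_eq : braidRho n = A n (n-1) := by
  suffices h : ∀ m, ((List.range m).map (braidGen n)).prod = A n m from h (n-1)
  intro m
  induction m with
  | zero => simp [show A n 0 = (1:BraidGroup n) from rfl]
  | succ m ih =>
      rw [List.range_succ, List.map_append, List.prod_append, ih]
      simp [show A n (m+1) = A n m * braidGen n m from rfl]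

lemma rev_eq : (((List.range (n-1)).reverse).map (braidGen n)).prod = E n 0 (n-1) := by
  suffices h : ∀ m, (((List.range m).reverse).map (braidGen n)).prod = E n 0 m from h (n-1)
  intro m
  induction m with
  | zero => simp [show E n 0 0 = (1:BraidGroup n) from rfl]
  | succ m ih =>
      have hrev : (List.range (m+1)).reverse = m :: (List.range m).reverse := by
        rw [List.range_succ, List.reverse_append]; rfl
      rw [hrev, List.map_cons, List.prod_cons, ih, E_succ_top, Nat.zero_add]

end SphereBraidAux

open SphereBraidAux in
/-- In the braid group of the sphere, i.e. the quotient of `B_n` by the normal closure of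
the sphere relator, the relation `(σ_1 ⋯ σ_{n-1})^{2n} = 1` holds. -/
theorem sphere_braid_fullTwist_order (n : ℕ) :
    (QuotientGroup.mk (braidRho n) :
        BraidGroup n ⧸ Subgroup.normalClosure {sphereRel n}) ^ (2 * n) = 1 := by
  rcases Nat.eq_zero_or_pos n with hn | hn
  · subst hn; simp
  set N := Subgroup.normalClosure {sphereRel n} with hN
  let π : BraidGroup n →* BraidGroup n ⧸ N := QuotientGroup.mk' N
  have hs : π (sphereRel n) = 1 := by
    apply (QuotientGroup.eq_one_iff _).mpr
    exact Subgroup.subset_normalClosure (Set.mem_singleton _)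
  have hsplit : sphereRel n = A n (n-1) * E n 0 (n-1) := by
    rw [sphereRel, rho_eq, rev_eq]
  set a : BraidGroup n ⧸ N := π (A n (n-1)) with ha
  set d : BraidGroup n ⧸ N := π (E n 0 (n-1)) with hd
  set t : BraidGroup n ⧸ N := π (Del n n) with htt
  have had : a * d = 1 := by
    rw [ha, hd, ← map_mul, ← hsplit, hs]
  have hdinv : d = a⁻¹ := (inv_eq_of_mul_eq_one_right had).symm
  have hI : t * a = a⁻¹ * t := by
    have h1 := Icomm (n := n) (n-1) 0 (by omega)
    have h2 : π (Del n n) * π (A n (n-1)) = π (E n 0 (n-1)) * π (Del n n) := by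
      rw [← map_mul, ← map_mul, h1]
    rw [← ha, ← hd, ← htt] at h2
    rw [h2, hdinv]
  have hII : t * t = a ^ n := by
    have h1 := Dsq (n := n) (n-1) (le_refl _)
    rw [show n - 1 + 1 = n from by omega] at h1
    have h2 : π (Del n n) * π (Del n n) = π (A n (n-1)) ^ n := by
      rw [← map_mul, h1, map_pow]
    rw [← ha, ← htt] at h2
    exact h2
  have key : ∀ m : ℕ, t * a ^ m = a⁻¹ ^ m * t := by
    intro m
    induction m with
    | zero => simp
    | succ m ih =>
        rw [pow_succ, pow_succ, ← mul_assoc, ih, mul_assoc, mul_assoc, hI]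
  have h3 : t * (t * t) = a⁻¹ ^ n * t := by
    have h := key n
    rw [← hII] at h
    exact h
  have h4 : (t * t) * t = a⁻¹ ^ n * t := by rw [← h3]; group
  have h5 : t * t = a⁻¹ ^ n := mul_right_cancel h4
  have h6 : a ^ n = (a ^ n)⁻¹ := by
    calc a ^ n = t * t := hII.symm
      _ = a⁻¹ ^ n := h5
      _ = (a ^ n)⁻¹ := inv_pow a n
  have h7 : a ^ (2 * n) = 1 := by
    rw [two_mul, pow_add]
    nth_rw 1 [h6]
    rw [inv_mul_cancel]
  have hgoal : (QuotientGroup.mk (braidRho n) : BraidGroup n ⧸ N) = a := by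
    rw [ha, rho_eq]; rfl
  rw [hgoal, h7]
end

section
/- Let G act on a small category C as above and let C/G denote the quotient category with objects (Ob C)/G and morphisms (C/G)(α,β) = X(α,β)^{G×G}, where X(α,β) = ⊔_{X∈α, Y∈β} Hom_C(X,Y). Then for X ∈ α and Y ∈ β, there is a bijection (C/G)(α,β) ≅ Hom_C(X,Y)^{G_X × G_Y}, where G_X = {g ∈ G | gX = X} acts via the induced action. -/
open CategoryTheory

universe u v

variable {G : Type*} [Group G] {C : Type u} [Category.{v} C]

/-- The objects in the `G`-orbit of `X` (for the action `act` on objects). -/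
def OrbitObj (act : G → C ≃ C) (X : C) : Type u := {Z : C // ∃ g : G, act g X = Z}

/-- A family of morphisms indexed by the orbits of `X` and `Y`: an element of
`𝒳(α,β) = ∏_{Z ∈ α, W ∈ β} Hom_C(Z, W)` where `α, β` are the orbits of `X, Y`. -/
def HomFam (act : G → C ≃ C) (X Y : C) : Type _ :=
  ∀ (a : OrbitObj act X) (b : OrbitObj act Y), (a.1 ⟶ b.1)

/-- `G × G`-invariance of a family: the value at `(g·Z, h·W)` is
`i_W^h ∘ (value at (Z,W)) ∘ (i_Z^g)⁻¹`. -/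
def IsEquivariant (act : G → C ≃ C)
    (hmul : ∀ g h : G, act (g * h) = (act g).trans (act h))
    (ι : ∀ (g : G) (X : C), X ≅ act g X) {X Y : C}
    (f : HomFam act X Y) : Prop :=
  ∀ (g h : G) (a : OrbitObj act X) (b : OrbitObj act Y),
    f ⟨act g a.1, by
        obtain ⟨k, hk⟩ := a.2
        exact ⟨k * g, by rw [hmul, Equiv.trans_apply, hk]⟩⟩
      ⟨act h b.1, by
        obtain ⟨k, hk⟩ := b.2
        exact ⟨k * h, by rw [hmul, Equiv.trans_apply, hk]⟩⟩ =
      (ι g a.1).inv ≫ f a b ≫ (ι h b.1).hom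

/-- A morphism `φ : X ⟶ Y` is fixed by the stabilizers `G_X × G_Y`:
`(g,h)·φ = i_Y^h ∘ φ ∘ (i_X^g)⁻¹ = φ` for all `g ∈ G_X`, `h ∈ G_Y`. -/
def IsStabFixed (act : G → C ≃ C) (ι : ∀ (g : G) (X : C), X ≅ act g X)
    {X Y : C} (φ : X ⟶ Y) : Prop :=
  ∀ (g h : G) (hg : act g X = X) (hh : act h Y = Y),
    (ι g X).inv ≫ φ ≫ (ι h Y).hom = eqToHom hg ≫ φ ≫ eqToHom hh.symm

section AuxLemmas

set_option linter.unusedSectionVars false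

lemma iota_hom_congr (act : G → C ≃ C) (ι : ∀ (g : G) (X : C), X ≅ act g X)
    (g : G) {P Q : C} (h : P = Q) :
    (ι g P).hom = eqToHom h ≫ (ι g Q).hom ≫ eqToHom (by rw [h]) := by
  subst h; simp

lemma iota_inv_congr (act : G → C ≃ C) (ι : ∀ (g : G) (X : C), X ≅ act g X)
    (g : G) {P Q : C} (h : P = Q) :
    (ι g P).inv = eqToHom (by rw [h]) ≫ (ι g Q).inv ≫ eqToHom h.symm := by
  subst h; simp

lemma iota_elem_congr (act : G → C ≃ C) (ι : ∀ (g : G) (X : C), X ≅ act g X)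
    {g g' : G} (h : g = g') (X : C) :
    (ι g X).hom ≫ eqToHom (by rw [h]) = (ι g' X).hom := by
  subst h; simp

lemma homfam_congr (act : G → C ≃ C) {X Y : C} (f : HomFam act X Y)
    {a a' : OrbitObj act X} {b b' : OrbitObj act Y} (ha : a = a') (hb : b = b') :
    f a b = eqToHom (by rw [ha]) ≫ f a' b' ≫ eqToHom (by rw [hb]) := by
  subst ha hb; simp

lemma stab_aux (act : G → C ≃ C) (hone : act 1 = Equiv.refl C)
    (hmul : ∀ g h : G, act (g * h) = (act g).trans (act h))
    {X : C} (g g' : G) (e : act g X = act g' X) : act (g * g'⁻¹) X = X := by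
  have h1 : act (g * g'⁻¹) X = act g'⁻¹ (act g X) := by rw [hmul]; rfl
  have h2 : act (g' * g'⁻¹) X = act g'⁻¹ (act g' X) := by rw [hmul]; rfl
  rw [h1, e, ← h2, mul_inv_cancel, hone]; rfl

lemma hcoc_inv (act : G → C ≃ C) (ι : ∀ (g : G) (X : C), X ≅ act g X)
    (hmul : ∀ g h : G, act (g * h) = (act g).trans (act h))
    (hcoc : ∀ (g h : G) (X : C),
      (ι (g * h) X).hom =
        (ι g X).hom ≫ (ι h (act g X)).hom ≫ eqToHom (by rw [hmul g h]; rfl))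
    (g h : G) (X : C) :
    (ι (g * h) X).inv =
      eqToHom (show act (g * h) X = act h (act g X) by rw [hmul g h]; rfl) ≫
        (ι h (act g X)).inv ≫ (ι g X).inv := by
  symm
  rw [← Iso.comp_hom_eq_id, hcoc]
  simp

lemma iota_hom_decomp (act : G → C ≃ C) (ι : ∀ (g : G) (X : C), X ≅ act g X)
    (hone : act 1 = Equiv.refl C)
    (hmul : ∀ g h : G, act (g * h) = (act g).trans (act h))
    (hcoc : ∀ (g h : G) (X : C),
      (ι (g * h) X).hom =
        (ι g X).hom ≫ (ι h (act g X)).hom ≫ eqToHom (by rw [hmul g h]; rfl))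
    {X : C} (g g' : G) (e : act g X = act g' X) :
    (ι g X).hom = (ι (g * g'⁻¹) X).hom ≫ eqToHom (stab_aux act hone hmul g g' e) ≫
      (ι g' X).hom ≫ eqToHom e.symm := by
  have hkg : (g * g'⁻¹) * g' = g := inv_mul_cancel_right g g'
  have h1 := iota_elem_congr act ι hkg X
  rw [← h1, hcoc (g * g'⁻¹) g' X,
    iota_hom_congr act ι g' (stab_aux act hone hmul g g' e)]
  simp [eqToHom_trans]

lemma keyLemma (act : G → C ≃ C) (ι : ∀ (g : G) (X : C), X ≅ act g X)
    (hone : act 1 = Equiv.refl C)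
    (hmul : ∀ g h : G, act (g * h) = (act g).trans (act h))
    (hcoc : ∀ (g h : G) (X : C),
      (ι (g * h) X).hom =
        (ι g X).hom ≫ (ι h (act g X)).hom ≫ eqToHom (by rw [hmul g h]; rfl))
    {X Y : C} (φ : X ⟶ Y) (hφ : IsStabFixed act ι φ)
    (g g' h h' : G) (e1 : act g X = act g' X) (e2 : act h Y = act h' Y) :
    (ι g X).inv ≫ φ ≫ (ι h Y).hom =
      eqToHom e1 ≫ (ι g' X).inv ≫ φ ≫ (ι h' Y).hom ≫ eqToHom e2.symm := by
  have hk := stab_aux act hone hmul g g' e1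
  have hl := stab_aux act hone hmul h h' e2
  have hgd := iota_hom_decomp act ι hone hmul hcoc g g' e1
  have hhd := iota_hom_decomp act ι hone hmul hcoc h h' e2
  have key := hφ (g * g'⁻¹) (h * h'⁻¹) hk hl
  have key' : eqToHom hk ≫ φ =
      (ι (g * g'⁻¹) X).inv ≫ φ ≫ (ι (h * h'⁻¹) Y).hom ≫ eqToHom hl := by
    have k2 := key =≫ eqToHom hl
    simp only [Category.assoc, eqToHom_trans, eqToHom_refl, Category.comp_id] at k2
    exact k2.symm
  rw [Iso.inv_comp_eq, hgd, hhd]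
  simp only [Category.assoc, eqToHom_trans, eqToHom_refl, Category.comp_id,
    Category.id_comp, eqToHom_trans_assoc, Iso.hom_inv_id_assoc]
  slice_rhs 2 3 => rw [key']
  simp

end AuxLemmas

/-- For `X ∈ α`, `Y ∈ β`, evaluation at `(X, Y)` is a bijection from
`(C/G)(α,β) = 𝒳(α,β)^{G×G}` onto `Hom_C(X,Y)^{G_X × G_Y}`. -/
theorem quotient_hom_equiv_stab_fixed (act : G → C ≃ C)
    (ι : ∀ (g : G) (X : C), X ≅ act g X)
    (hone : act 1 = Equiv.refl C)
    (hmul : ∀ g h : G, act (g * h) = (act g).trans (act h))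
    (hcoc : ∀ (g h : G) (X : C),
      (ι (g * h) X).hom =
        (ι g X).hom ≫ (ι h (act g X)).hom ≫ eqToHom (by rw [hmul g h]; rfl))
    (X Y : C) :
    Function.Injective
      (fun f : {f : HomFam act X Y // IsEquivariant act hmul ι f} =>
        f.1 ⟨X, 1, by rw [hone]; rfl⟩ ⟨Y, 1, by rw [hone]; rfl⟩) ∧
    Set.range
      (fun f : {f : HomFam act X Y // IsEquivariant act hmul ι f} =>
        f.1 ⟨X, 1, by rw [hone]; rfl⟩ ⟨Y, 1, by rw [hone]; rfl⟩) =
      {φ : X ⟶ Y | IsStabFixed act ι φ} := by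
  constructor
  · rintro ⟨f₁, hf₁⟩ ⟨f₂, hf₂⟩ h
    have h' : f₁ ⟨X, 1, by rw [hone]; rfl⟩ ⟨Y, 1, by rw [hone]; rfl⟩ =
        f₂ ⟨X, 1, by rw [hone]; rfl⟩ ⟨Y, 1, by rw [hone]; rfl⟩ := h
    apply Subtype.ext
    funext a b
    obtain ⟨Za, s, rfl⟩ := a
    obtain ⟨Zb, t, rfl⟩ := b
    calc f₁ ⟨act s X, s, rfl⟩ ⟨act t Y, t, rfl⟩
        = (ι s X).inv ≫ f₁ ⟨X, 1, by rw [hone]; rfl⟩ ⟨Y, 1, by rw [hone]; rfl⟩ ≫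
            (ι t Y).hom :=
          hf₁ s t ⟨X, 1, by rw [hone]; rfl⟩ ⟨Y, 1, by rw [hone]; rfl⟩
      _ = (ι s X).inv ≫ f₂ ⟨X, 1, by rw [hone]; rfl⟩ ⟨Y, 1, by rw [hone]; rfl⟩ ≫
            (ι t Y).hom := by rw [h']
      _ = f₂ ⟨act s X, s, rfl⟩ ⟨act t Y, t, rfl⟩ :=
          (hf₂ s t ⟨X, 1, by rw [hone]; rfl⟩ ⟨Y, 1, by rw [hone]; rfl⟩).symm
  · ext φ
    simp only [Set.mem_range, Set.mem_setOf_eq]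
    constructor
    · rintro ⟨⟨f, hf⟩, rfl⟩
      intro g h hg hh
      have h1 := hf g h ⟨X, 1, by rw [hone]; rfl⟩ ⟨Y, 1, by rw [hone]; rfl⟩
      have h2 := homfam_congr act f
        (a := ⟨act g X, 1 * g, by rw [hmul, Equiv.trans_apply, hone]; rfl⟩)
        (a' := ⟨X, 1, by rw [hone]; rfl⟩)
        (b := ⟨act h Y, 1 * h, by rw [hmul, Equiv.trans_apply, hone]; rfl⟩)
        (b' := ⟨Y, 1, by rw [hone]; rfl⟩)
        (Subtype.ext hg) (Subtype.ext hh)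
      exact h1.symm.trans h2
    · intro hφ
      refine ⟨⟨fun a b =>
        eqToHom a.2.choose_spec.symm ≫ (ι a.2.choose X).inv ≫ φ ≫
          (ι b.2.choose Y).hom ≫ eqToHom b.2.choose_spec, ?_⟩, ?_⟩
      · intro g h a b
        set A : OrbitObj act X := ⟨act g a.1, by
          obtain ⟨k, hk⟩ := a.2
          exact ⟨k * g, by rw [hmul, Equiv.trans_apply, hk]⟩⟩ with hA
        set B : OrbitObj act Y := ⟨act h b.1, by
          obtain ⟨k, hk⟩ := b.2
          exact ⟨k * h, by rw [hmul, Equiv.trans_apply, hk]⟩⟩ with hB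
        have hs : act a.2.choose X = a.1 := a.2.choose_spec
        have ht : act b.2.choose Y = b.1 := b.2.choose_spec
        have e1 : act A.2.choose X = act (a.2.choose * g) X := by
          rw [hmul, Equiv.trans_apply, hs]; exact A.2.choose_spec
        have e2 : act B.2.choose Y = act (b.2.choose * h) Y := by
          rw [hmul, Equiv.trans_apply, ht]; exact B.2.choose_spec
        show eqToHom A.2.choose_spec.symm ≫ (ι A.2.choose X).inv ≫ φ ≫
            (ι B.2.choose Y).hom ≫ eqToHom B.2.choose_spec =
          (ι g a.1).inv ≫ (eqToHom a.2.choose_spec.symm ≫ (ι a.2.choose X).inv ≫ φ ≫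
            (ι b.2.choose Y).hom ≫ eqToHom b.2.choose_spec) ≫ (ι h b.1).hom
        slice_lhs 2 4 =>
          rw [keyLemma act ι hone hmul hcoc φ hφ A.2.choose (a.2.choose * g)
            B.2.choose (b.2.choose * h) e1 e2]
        rw [hcoc_inv act ι hmul hcoc a.2.choose g X,
          hcoc (b.2.choose) h Y,
          iota_inv_congr act ι g hs, iota_hom_congr act ι h ht]
        simp only [Category.assoc, eqToHom_trans, eqToHom_refl, Category.comp_id,
          Category.id_comp, eqToHom_trans_assoc]
      · show eqToHom _ ≫ (ι _ X).inv ≫ φ ≫ (ι _ Y).hom ≫ eqToHom _ = φ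
        have hs : act (⟨X, 1, by rw [hone]; rfl⟩ : OrbitObj act X).2.choose X = X :=
          (⟨X, 1, by rw [hone]; rfl⟩ : OrbitObj act X).2.choose_spec
        have ht : act (⟨Y, 1, by rw [hone]; rfl⟩ : OrbitObj act Y).2.choose Y = Y :=
          (⟨Y, 1, by rw [hone]; rfl⟩ : OrbitObj act Y).2.choose_spec
        slice_lhs 2 4 => rw [hφ _ _ hs ht]
        simp
end

section
/- Every half-balanced structure on a braided monoidal category induces a balanced structure via θ_X := a_{X*} ∘ a_X; that is, the natural automorphisms θ_X so defined satisfy θ_{X⊗Y} = (θ_X ⊗ θ_Y) ∘ β_{Y,X} ∘ β_{X,Y}. -/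
open CategoryTheory MonoidalCategory

universe u v

variable (C : Type u) [Category.{v} C] [MonoidalCategory C] [BraidedCategory C]

/-- A half-balanced structure on a braided monoidal category: an involutive autofunctor
`*` which anti-commutes with the tensor product and is compatible with the braiding,
together with a natural family of isomorphisms `a_X : X ≅ X*` satisfying
`a_{X⊗Y} = (a_Y ⊗ a_X) ∘ β_{X,Y}`. -/
structure HalfBalanced where
  star : C → C
  starMap : ∀ {X Y : C}, (X ⟶ Y) → (star X ⟶ star Y)
  invol : ∀ X : C, star (star X) = X
  star_tensor : ∀ X Y : C, star (X ⊗ Y) = star Y ⊗ star X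
  starMap_id : ∀ X : C, starMap (𝟙 X) = 𝟙 (star X)
  starMap_comp : ∀ {X Y Z : C} (f : X ⟶ Y) (g : Y ⟶ Z),
    starMap (f ≫ g) = starMap f ≫ starMap g
  starMap_invol : ∀ {X Y : C} (f : X ⟶ Y),
    starMap (starMap f) = eqToHom (invol X) ≫ f ≫ eqToHom (invol Y).symm
  starMap_tensor : ∀ {X X' Y Y' : C} (f : X ⟶ X') (g : Y ⟶ Y'),
    starMap (f ⊗ₘ g) =
      eqToHom (star_tensor X Y) ≫ (starMap g ⊗ₘ starMap f) ≫ eqToHom (star_tensor X' Y').symm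
  star_braiding : ∀ X Y : C,
    starMap (β_ X Y).hom =
      eqToHom (star_tensor X Y) ≫ (β_ (star Y) (star X)).hom ≫ eqToHom (star_tensor Y X).symm
  a : ∀ X : C, X ≅ star X
  a_natural : ∀ {X Y : C} (f : X ⟶ Y), f ≫ (a Y).hom = (a X).hom ≫ starMap f
  a_tensor : ∀ X Y : C,
    (a (X ⊗ Y)).hom =
      (β_ X Y).hom ≫ ((a Y).hom ⊗ₘ (a X).hom) ≫ eqToHom (star_tensor X Y).symm

variable {C}

/-- The balance induced by a half-balanced structure: `θ_X := a_{X*} ∘ a_X`. -/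
def HalfBalanced.θ (hb : HalfBalanced C) (X : C) : X ≅ X :=
  hb.a X ≪≫ hb.a (hb.star X) ≪≫ eqToIso (hb.invol X)

/-! Expanding `a_{X⊗Y}` and then `a_{(X⊗Y)*} ≅ a_{Y*⊗X*}` by the tensor axiom gives
`β_{X,Y} ≫ (a_Y ⊗ a_X) ≫ β_{Y*,X*} ≫ (a_{X*} ⊗ a_{Y*})`; naturality of the braiding moves
`a_Y ⊗ a_X` past the second braiding, leaving `β_{X,Y} ≫ β_{Y,X} ≫ (θ_X ⊗ θ_Y)`. -/

theorem CategoryTheory.MonoidalCategory.eqToHom_tensorHom_eqToHom {D : Type*} [Category D]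
    [MonoidalCategory D] {X X' Y Y' : D} (h : X = X') (h' : Y = Y') :
    (eqToHom h ⊗ₘ eqToHom h') = eqToHom (congr_arg₂ (· ⊗ ·) h h') := by
  subst h h'
  simp

namespace HalfBalanced

variable (hb : HalfBalanced C)

theorem θ_hom (X : C) :
    (hb.θ X).hom = (hb.a X).hom ≫ (hb.a (hb.star X)).hom ≫ eqToHom (hb.invol X) :=
  rfl

theorem eqToHom_comp_a_hom {X Y : C} (h : X = Y) :
    eqToHom h ≫ (hb.a Y).hom = (hb.a X).hom ≫ eqToHom (congrArg hb.star h) := by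
  subst h
  simp

theorem θ_naturality {X Y : C} (f : X ⟶ Y) : f ≫ (hb.θ Y).hom = (hb.θ X).hom ≫ f := by
  simp [θ_hom, reassoc_of% hb.a_natural f, reassoc_of% hb.a_natural (hb.starMap f),
    hb.starMap_invol]

theorem eqToHom_comp_a_hom_star_tensor (X Y : C) :
    eqToHom (hb.star_tensor X Y).symm ≫ (hb.a (hb.star (X ⊗ Y))).hom =
      (β_ (hb.star Y) (hb.star X)).hom ≫
        ((hb.a (hb.star X)).hom ⊗ₘ (hb.a (hb.star Y)).hom) ≫
          eqToHom ((hb.star_tensor _ _).symm.trans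
            (congrArg hb.star (hb.star_tensor X Y).symm)) := by
  simp [eqToHom_comp_a_hom, hb.a_tensor]

theorem θ_tensor (X Y : C) :
    (hb.θ (X ⊗ Y)).hom = (β_ X Y).hom ≫ (β_ Y X).hom ≫ ((hb.θ X).hom ⊗ₘ (hb.θ Y).hom) := by
  rw [θ_hom, θ_hom, θ_hom, ← tensorHom_comp_tensorHom, ← tensorHom_comp_tensorHom,
    eqToHom_tensorHom_eqToHom, hb.a_tensor]
  simp [reassoc_of% hb.eqToHom_comp_a_hom_star_tensor X Y,
    BraidedCategory.braiding_naturality_assoc]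

end HalfBalanced

/-- A half-balanced structure induces a balanced structure via `θ_X := a_{X*} ∘ a_X`:
the `θ_X` are natural automorphisms satisfying
`θ_{X⊗Y} = (θ_X ⊗ θ_Y) ∘ β_{Y,X} ∘ β_{X,Y}`. -/
theorem HalfBalanced.theta_balanced (hb : HalfBalanced C) :
    (∀ {X Y : C} (f : X ⟶ Y), f ≫ (hb.θ Y).hom = (hb.θ X).hom ≫ f) ∧
    (∀ X Y : C,
      (hb.θ (X ⊗ Y)).hom =
        (β_ X Y).hom ≫ (β_ Y X).hom ≫ ((hb.θ X).hom ⊗ₘ (hb.θ Y).hom)) :=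
  ⟨hb.θ_naturality, hb.θ_tensor⟩
end

section
/- Let C be a half-balanced braided monoidal category with induced balance θ_X = a_{X*}a_X. Then for any objects X, Y: β_{X,Y}^{-1}(θ_Y^{-1}⊗id_X) a_{X*⊗Y*} β_{X*,Y*}^{-1}(θ_{Y*}^{-1}⊗id_{X*}) a_{X⊗Y} = θ_X ⊗ θ_Y^{-1}. -/
/-! Expanding both occurrences of `a` on tensor products by `a_{X⊗Y} = (a_Y ⊗ a_X) β_{X,Y}`,
the inner braiding cancels against `β_{X*,Y*}⁻¹`, so the left-hand side is
`β_{X,Y}⁻¹ (u ⊗ v) β_{X,Y}` with `v = a_{X*} a_X = θ_X` and `u = θ_Y⁻¹ a_{Y*} θ_{Y*}⁻¹ a_Y`.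
Since `a` is natural, `a_{X**} = a_X` up to `X** = X`, hence `a_Y θ_Y = θ_{Y*} a_Y`,
so `u = θ_Y⁻¹`; naturality of the braiding moves `u ⊗ v` across `β_{X,Y}`. -/

open CategoryTheory MonoidalCategory

universe u v

variable (C : Type u) [Category.{v} C] [MonoidalCategory C] [BraidedCategory C]

variable {C}

namespace HalfBalanced

variable (hb : HalfBalanced C)

lemma starMap_eqToHom {X Y : C} (h : X = Y) :
    hb.starMap (eqToHom h) = eqToHom (congrArg hb.star h) := by
  subst h
  exact hb.starMap_id X

lemma a_star_star_hom (X : C) :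
    (hb.a (hb.star (hb.star X))).hom =
      eqToHom (hb.invol X) ≫ (hb.a X).hom ≫ eqToHom (congrArg hb.star (hb.invol X)).symm := by
  have h := hb.a_natural (eqToHom (hb.invol X))
  rw [hb.starMap_eqToHom] at h
  rw [← Category.assoc, h, Category.assoc, eqToHom_trans, eqToHom_refl, Category.comp_id]

lemma a_hom_comp_a_hom (X : C) :
    (hb.a X).hom ≫ (hb.a (hb.star X)).hom ≫ eqToHom (hb.invol X) = (hb.θ X).hom :=
  rfl

lemma a_hom_comp_θ_star_hom (X : C) :
    (hb.a X).hom ≫ (hb.θ (hb.star X)).hom = (hb.θ X).hom ≫ (hb.a X).hom := by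
  simp [θ, a_star_star_hom]

lemma a_hom_comp_θ_star_inv (X : C) :
    (hb.a X).hom ≫ (hb.θ (hb.star X)).inv = (hb.θ X).inv ≫ (hb.a X).hom := by
  rw [Iso.comp_inv_eq, Category.assoc, a_hom_comp_θ_star_hom, Iso.inv_hom_id_assoc]

omit [BraidedCategory C] in
lemma eqToHom_eq_tensorHom {A A' B B' : C} (hA : A = A') (hB : B = B') (h : A ⊗ B = A' ⊗ B') :
    eqToHom h = eqToHom hA ⊗ₘ eqToHom hB := by
  subst hA hB
  simp

lemma a_tensor_hom_comp_a_tensor_hom {X X' Y Y' : C}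
    (f : hb.star Y ⟶ hb.star Y') (g : hb.star X ⟶ hb.star X')
    (h : hb.star (hb.star X' ⊗ hb.star Y') = Y' ⊗ X') :
    (hb.a (X ⊗ Y)).hom ≫ eqToHom (hb.star_tensor X Y) ≫ (f ⊗ₘ g) ≫
        (β_ (hb.star X') (hb.star Y')).inv ≫ (hb.a (hb.star X' ⊗ hb.star Y')).hom ≫ eqToHom h =
      (β_ X Y).hom ≫
        (((hb.a Y).hom ≫ f ≫ (hb.a (hb.star Y')).hom ≫ eqToHom (hb.invol Y')) ⊗ₘ
          ((hb.a X).hom ≫ g ≫ (hb.a (hb.star X')).hom ≫ eqToHom (hb.invol X'))) := by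
  simp only [a_tensor, Category.assoc, eqToHom_trans_assoc, eqToHom_refl, Category.id_comp,
    Iso.inv_hom_id_assoc, eqToHom_trans, eqToHom_eq_tensorHom (hb.invol Y') (hb.invol X'),
    tensorHom_comp_tensorHom]

end HalfBalanced

/-- In a half-balanced braided monoidal category with induced balance `θ_X = a_{X*} a_X`,
for any objects `X, Y`:
`β_{X,Y}⁻¹ (θ_Y⁻¹ ⊗ id_X) a_{X*⊗Y*} β_{X*,Y*}⁻¹ (θ_{Y*}⁻¹ ⊗ id_{X*}) a_{X⊗Y} = θ_X ⊗ θ_Y⁻¹`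
(reading composition right to left, with the identifications `(X⊗Y)* = Y*⊗X*` and
`X** = X`). -/
theorem HalfBalanced.key_identity (hb : HalfBalanced C) (X Y : C) :
    (hb.a (X ⊗ Y)).hom ≫ eqToHom (hb.star_tensor X Y) ≫
      ((hb.θ (hb.star Y)).inv ⊗ₘ 𝟙 (hb.star X)) ≫
      (β_ (hb.star X) (hb.star Y)).inv ≫
      (hb.a (hb.star X ⊗ hb.star Y)).hom ≫
      eqToHom (show hb.star (hb.star X ⊗ hb.star Y) = Y ⊗ X by
        rw [hb.star_tensor, hb.invol, hb.invol]) ≫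
      ((hb.θ Y).inv ⊗ₘ 𝟙 X) ≫ (β_ X Y).inv =
    (hb.θ X).hom ⊗ₘ (hb.θ Y).inv := by
  rw [reassoc_of% hb.a_tensor_hom_comp_a_tensor_hom, Category.id_comp,
    reassoc_of% hb.a_hom_comp_θ_star_inv, a_hom_comp_a_hom, a_hom_comp_a_hom, Iso.inv_hom_id,
    tensorHom_comp_tensorHom_assoc, Category.id_comp, Category.comp_id,
    ← BraidedCategory.braiding_naturality_assoc, Iso.hom_inv_id, Category.comp_id]
end
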